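/- The characteristic polynomial of the matrix H above factors as (x+2)^{N-1} · ((x+2)(x - H_{11}) - 4ξ²); in particular H has eigenvalue -2 with multiplicity at least N-1, and the other two eigenvalues are the roots of x² + (2 - H_{11})x - 2a = 0. -/

import Mathlib

/-!
The only off-diagonal entries of `H` couple the coordinates `0` and `i₀ + 1`. Splitting the
indices into `{0, i₀ + 1}` and the rest therefore makes `H` block diagonal, with the `2 × 2`
block `!![a - 2ξ², 2ξ; 2ξ, -2]` and the block `-2 • 1` of size `N - 1`, and the characteristic
polynomial is the product of those of the blocks.
-/

open Polynomial

/-- The Hessian matrix of an agent's utility in the private-goods mechanism. -/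
noncomputable def hessPvt (N : ℕ) (a ξ : ℝ) (i₀ : Fin N) :
    Matrix (Fin (N + 1)) (Fin (N + 1)) ℝ :=
  fun i j =>
    if i = 0 ∧ j = 0 then a - 2 * ξ ^ 2
    else if (i = 0 ∧ j = i₀.succ) ∨ (i = i₀.succ ∧ j = 0) then 2 * ξ
    else if i = j then -2
    else 0

namespace Matrix

variable {R ι κ : Type*} [CommRing R] [Fintype ι] [DecidableEq ι] [Fintype κ] [DecidableEq κ]

theorem charpoly_eq_mul_of_apply_compl_range_eq_zero (M : Matrix ι ι R) {f : κ → ι}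
    (hf : Function.Injective f) [DecidablePred (· ∈ Set.range f)]
    (h : ∀ i, ∀ j ∉ Set.range f, M (f i) j = 0) :
    M.charpoly = (M.submatrix f f).charpoly *
      (M.submatrix ((↑) : ↥(Set.range f)ᶜ → ι) (↑)).charpoly := by
  let e : κ ⊕ ↥(Set.range f)ᶜ ≃ ι :=
    (Equiv.sumCongr (Equiv.ofInjective f hf) (Equiv.refl _)).trans (Equiv.Set.sumCompl _)
  have hblocks : M.submatrix e e = fromBlocks (M.submatrix f f) 0 (M.submatrix (↑) f)
      (M.submatrix ((↑) : ↥(Set.range f)ᶜ → ι) (↑)) := by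
    ext (i | i) (j | j) <;> simp [e]
    exact h i j j.2
  rw [← charpoly_reindex e.symm, reindex_apply, Equiv.symm_symm, hblocks,
    charpoly_fromBlocks_zero₁₂]

theorem charpoly_diagonal_const (c : R) :
    (diagonal fun _ : ι => c).charpoly = (X - C c) ^ Fintype.card ι := by
  rw [charpoly_diagonal, Finset.prod_const, Finset.card_univ]

theorem charpoly_of_fin_two [Nontrivial R] (p q r s : R) :
    (!![p, q; r, s]).charpoly = (X - C p) * (X - C s) - C (q * r) := by
  rw [charpoly_fin_two, trace_fin_two_of, det_fin_two_of, map_add, map_sub, map_mul, map_mul]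
  ring

end Matrix

section hessPvt

variable {N : ℕ} (a ξ : ℝ) (i₀ : Fin N)

theorem pair_zero_succ_injective : Function.Injective ![(0 : Fin (N + 1)), i₀.succ] :=
  injective_pair_iff_ne.2 (Fin.succ_ne_zero i₀).symm

theorem card_compl_range_pair :
    Fintype.card ↥(Set.range ![(0 : Fin (N + 1)), i₀.succ])ᶜ = N - 1 := by
  rw [Fintype.card_compl_set, Fintype.card_fin,
    Set.card_range_of_injective (pair_zero_succ_injective i₀), Fintype.card_fin]
  omega

theorem hessPvt_submatrix_pair :
    (hessPvt N a ξ i₀).submatrix ![0, i₀.succ] ![0, i₀.succ] =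
      !![a - 2 * ξ ^ 2, 2 * ξ; 2 * ξ, -2] := by
  ext i j
  fin_cases i <;> fin_cases j <;> simp [hessPvt, (Fin.succ_ne_zero i₀).symm]

theorem hessPvt_pair_apply_of_notMem {j : Fin (N + 1)} (hj : j ∉ Set.range ![0, i₀.succ])
    (i : Fin 2) : hessPvt N a ξ i₀ (![0, i₀.succ] i) j = 0 := by
  simp only [Matrix.range_cons_cons_empty, Set.mem_insert_iff, Set.mem_singleton_iff, not_or] at hj
  fin_cases i <;> simp [hessPvt, hj.1, hj.2, Ne.symm hj.1, Ne.symm hj.2, Fin.succ_ne_zero]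

theorem hessPvt_submatrix_compl_pair :
    (hessPvt N a ξ i₀).submatrix ((↑) : ↥(Set.range ![0, i₀.succ])ᶜ → Fin (N + 1)) (↑) =
      Matrix.diagonal fun _ => -2 := by
  ext ⟨i, hi⟩ ⟨j, hj⟩
  simp only [Set.mem_compl_iff, Matrix.range_cons_cons_empty, Set.mem_insert_iff,
    Set.mem_singleton_iff, not_or] at hi hj
  simp [hessPvt, Matrix.diagonal_apply, hi.1, hi.2, hj.1, hj.2]

theorem hessPvt_charpoly :
    (hessPvt N a ξ i₀).charpoly =
      (X + C 2) ^ (N - 1) * ((X + C 2) * (X - C (a - 2 * ξ ^ 2)) - C (4 * ξ ^ 2)) := by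
  rw [(hessPvt N a ξ i₀).charpoly_eq_mul_of_apply_compl_range_eq_zero (pair_zero_succ_injective i₀)
      (fun i j hj => hessPvt_pair_apply_of_notMem a ξ i₀ hj i),
    hessPvt_submatrix_pair, Matrix.charpoly_of_fin_two, hessPvt_submatrix_compl_pair,
    Matrix.charpoly_diagonal_const, card_compl_range_pair, map_neg, sub_neg_eq_add, mul_comm]
  congr 1
  rw [show (4 * ξ ^ 2 : ℝ) = 2 * ξ * (2 * ξ) by ring]
  ring

end hessPvt

theorem stmt1_general (N : ℕ) (a ξ : ℝ) (i₀ : Fin N) :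
    (hessPvt N a ξ i₀).charpoly =
      (X + C 2) ^ (N - 1) *
        ((X + C 2) * (X - C (a - 2 * ξ ^ 2)) - C (4 * ξ ^ 2)) ∧
    N - 1 ≤ (hessPvt N a ξ i₀).charpoly.rootMultiplicity (-2) ∧
    ∀ x : ℝ, (hessPvt N a ξ i₀).charpoly.IsRoot x → x ≠ -2 →
      x ^ 2 + (2 - (a - 2 * ξ ^ 2)) * x - 2 * a = 0 := by
  refine ⟨hessPvt_charpoly a ξ i₀, ?_, fun x hx hx2 => ?_⟩
  · rw [le_rootMultiplicity_iff (Matrix.charpoly_monic _).ne_zero, hessPvt_charpoly,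
      map_neg, sub_neg_eq_add]
    exact dvd_mul_right _ _
  · rw [hessPvt_charpoly, IsRoot.def, eval_mul, mul_eq_zero] at hx
    simp only [eval_pow, eval_add, eval_sub, eval_mul, eval_X, eval_C] at hx
    rcases hx with hpow | hquad
    · exact absurd (eq_neg_of_add_eq_zero_left (eq_zero_of_pow_eq_zero hpow)) hx2
    · linear_combination hquad

/-- the characteristic polynomial of `H` factors as
`(x+2)^(N-1) ((x+2)(x - H₁₁) - 4ξ²)`; in particular `-2` is an eigenvalue of
multiplicity at least `N-1`, and every other eigenvalue is a root of
`x² + (2 - H₁₁) x - 2a = 0`. -/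
theorem stmt1 (N : ℕ) (hN : 1 ≤ N) (a ξ : ℝ) (i₀ : Fin N) :
    (hessPvt N a ξ i₀).charpoly =
      (X + C 2) ^ (N - 1) *
        ((X + C 2) * (X - C (a - 2 * ξ ^ 2)) - C (4 * ξ ^ 2)) ∧
    N - 1 ≤ (hessPvt N a ξ i₀).charpoly.rootMultiplicity (-2) ∧
    ∀ x : ℝ, (hessPvt N a ξ i₀).charpoly.IsRoot x → x ≠ -2 →
      x ^ 2 + (2 - (a - 2 * ξ ^ 2)) * x - 2 * a = 0 :=
  stmt1_general N a ξ i₀
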